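/- Let E be a finite set with |E| = e ≥ 1, let V be a ℚ-vector space, let ε ∈ {1, −1}, and let a : ℕ → (E → ℕ) → V be a family of elements (written a_i(n)) such that: (Parity) a_i(n) = 0 whenever (−1)^i ≠ ε; and (Relations) for every subset S ⊆ E with (−1)^{e − |S|} = −ε, every function n_S : S → ℕ, and every natural number q ≤ e − |S|, the finite sum ∑ a_i(n) over all pairs (i, m) with m : (E∖S) → ℕ and i + ∑_{v∉S} m_v = q, where n agrees with n_S on S and with m on E∖S, is zero. Then for every i < e: (i) a_i(n) = 0 whenever the support {v ∈ E : n_v ≠ 0} has fewer than e − i elements; and (ii) ∑_{n : E→ℕ, ∑ n_v = e−i} a_i(n) = 0. -/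

import Mathlib

/-!
Part (i), by strong induction on `i`: if the support `T` of `n` has fewer than `e - i` points,
enlarge it by at most one point to a set `S` at which the relation holds, and take `n_S = n`,
`q = i`. A term of index `j < i` has support of size at most `#T + (i - j) < e - j`, so it vanishes
by induction, and the only term left is `a_i(n)`.

Part (ii): by (i), `a_j(n) = 0` as soon as some `n_v ≥ 2` makes the support smaller than the total
degree allows, so the relation with `n_S = 1` reduces to `∑_{B ⊆ Sᶜ, #B = q - j} a_j(1_{S ∪ B})`.
For `q = e - #S = j + 1` the term of index `j + 1` dies by parity and, by induction on `j` and the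
double counting `(k + 1) ∑_{#B = k + 1} F B = ∑_{#B = k} ∑_{w ∉ B} F (B ∪ {w})`, so does every
term of index below `j`. Hence `∑_{w ∉ S} a_j(1_{S ∪ {w}}) = 0` whenever `#S = e - j - 1`, and one
more double counting gives (ii).
-/

open Finset

section Counting
variable {ι : Type*}

lemma card_filter_ne_zero_le_sum (s : Finset ι) (f : ι → ℕ) :
    #{v ∈ s | f v ≠ 0} ≤ ∑ v ∈ s, f v := by
  rw [card_filter]
  exact sum_le_sum fun v _ => by split_ifs <;> omega

lemma card_filter_ne_zero_lt_sum {s : Finset ι} {f : ι → ℕ} {v₀ : ι} (hv₀ : v₀ ∈ s)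
    (h : 2 ≤ f v₀) : #{v ∈ s | f v ≠ 0} < ∑ v ∈ s, f v := by
  rw [card_filter]
  exact sum_lt_sum (fun v _ => by split_ifs <;> omega) ⟨v₀, hv₀, by split_ifs <;> omega⟩

lemma card_filter_piecewise_ne_zero [Fintype ι] [DecidableEq ι] (S : Finset ι) (f g : ι → ℕ) :
    #{v | S.piecewise f g v ≠ 0} = #{v ∈ S | f v ≠ 0} + #{v ∈ Sᶜ | g v ≠ 0} := by
  simp only [card_filter, ← sum_add_sum_compl S (fun v => if S.piecewise f g v ≠ 0 then 1 else 0)]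
  congr 1 <;> refine sum_congr rfl fun v hv => ?_
  · rw [piecewise_eq_of_mem _ _ _ hv]
  · rw [piecewise_eq_of_notMem _ _ _ (mem_compl.mp hv)]

lemma exists_superset_card_mod_two [Fintype ι] [DecidableEq ι] (T : Finset ι)
    (hT : #T < Fintype.card ι) (p : ℕ) : ∃ S, T ⊆ S ∧ #S ≤ #T + 1 ∧ #S % 2 = p % 2 := by
  by_cases hp : #T % 2 = p % 2
  · exact ⟨T, subset_rfl, by omega, hp⟩
  · obtain ⟨w, -, hw⟩ := exists_mem_notMem_of_card_lt_card (s := T) (t := univ) (by rwa [card_univ])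
    have := card_insert_of_notMem hw
    exact ⟨insert w T, subset_insert w T, by omega, by omega⟩

end Counting

lemma neg_one_pow_eq_neg_one_pow_iff (m n : ℕ) : (-1 : ℤ) ^ m = (-1) ^ n ↔ m % 2 = n % 2 := by
  rw [neg_one_pow_eq_pow_mod_two, neg_one_pow_eq_pow_mod_two (n := n)]
  rcases Nat.mod_two_eq_zero_or_one m with hm | hm <;>
    rcases Nat.mod_two_eq_zero_or_one n with hn | hn <;> simp [hm, hn]

lemma neg_one_pow_eq_neg_neg_one_pow_iff (m n : ℕ) :
    (-1 : ℤ) ^ m = -(-1) ^ n ↔ m % 2 ≠ n % 2 := by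
  rw [show -(-1 : ℤ) ^ n = (-1) ^ (n + 1) by ring, neg_one_pow_eq_neg_one_pow_iff]
  omega

section DoubleCounting
variable {ι V : Type*} [DecidableEq ι] [AddCommMonoid V]

lemma succ_nsmul_sum_powersetCard_succ (s : Finset ι) (k : ℕ) (F : Finset ι → V) :
    (k + 1) • ∑ B ∈ s.powersetCard (k + 1), F B =
      ∑ B ∈ s.powersetCard k, ∑ w ∈ s \ B, F (insert w B) := by
  have hcard : ∀ B ∈ s.powersetCard (k + 1), (k + 1) • F B = ∑ _w ∈ B, F B := fun B hB => by
    rw [sum_const, (mem_powersetCard.mp hB).2]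
  rw [smul_sum, sum_congr rfl hcard, sum_sigma', sum_sigma']
  refine sum_nbij' (fun x => ⟨x.1.erase x.2, x.2⟩) (fun x => ⟨insert x.2 x.1, x.2⟩)
    ?_ ?_ ?_ ?_ ?_
  · rintro ⟨B, w⟩ hx
    simp only [mem_sigma, mem_powersetCard] at hx ⊢
    obtain ⟨⟨hBs, hB⟩, hw⟩ := hx
    exact ⟨⟨(erase_subset w B).trans hBs, by rw [card_erase_of_mem hw, hB]; rfl⟩,
      mem_sdiff.mpr ⟨hBs hw, notMem_erase w B⟩⟩
  · rintro ⟨B, w⟩ hx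
    simp only [mem_sigma, mem_powersetCard, mem_sdiff] at hx ⊢
    obtain ⟨⟨hBs, hB⟩, hws, hw⟩ := hx
    exact ⟨⟨insert_subset hws hBs, by rw [card_insert_of_notMem hw, hB]⟩, mem_insert_self w B⟩
  · rintro ⟨B, w⟩ hx
    simp [insert_erase (mem_sigma.mp hx).2]
  · rintro ⟨B, w⟩ hx
    simp [erase_insert (mem_sdiff.mp (mem_sigma.mp hx).2).2]
  · rintro ⟨B, w⟩ hx
    simp [insert_erase (mem_sigma.mp hx).2]

lemma sum_powersetCard_succ_eq_zero [IsAddTorsionFree V] {s : Finset ι} {k : ℕ}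
    {F : Finset ι → V} (h : ∀ B ∈ s.powersetCard k, ∑ w ∈ s \ B, F (insert w B) = 0) :
    ∑ B ∈ s.powersetCard (k + 1), F B = 0 := by
  have key := succ_nsmul_sum_powersetCard_succ s k F
  rw [sum_eq_zero h] at key
  exact (smul_eq_zero.mp key).resolve_left k.succ_ne_zero

end DoubleCounting

section Indicator
variable {ι : Type*}

lemma indicator_one_apply_le_card (B : Finset ι) (v : ι) :
    (B : Set ι).indicator (1 : ι → ℕ) v ≤ #B := by
  by_cases hv : v ∈ B
  · rw [Set.indicator_of_mem (mem_coe.mpr hv), Pi.one_apply]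
    exact card_pos.mpr ⟨v, hv⟩
  · rw [Set.indicator_of_notMem (mem_coe.not.mpr hv)]
    exact Nat.zero_le _

lemma sum_indicator_one_of_subset {B s : Finset ι} (h : B ⊆ s) :
    ∑ v ∈ s, (B : Set ι).indicator (1 : ι → ℕ) v = #B := by
  rw [sum_indicator_subset _ h, card_eq_sum_ones]
  rfl

lemma eq_indicator_one_of_le_one [Fintype ι] {m : ι → ℕ} (h : ∀ v, m v ≤ 1) :
    m = (({v | m v ≠ 0} : Finset ι) : Set ι).indicator 1 := by
  funext v
  by_cases hv : m v = 0
  · rw [Set.indicator_of_notMem (by simpa using hv), hv]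
  · rw [Set.indicator_of_mem (by simpa using hv), Pi.one_apply]
    have := h v
    omega

lemma piecewise_indicator_eq_indicator_union [DecidableEq ι] {M : Type*} [Zero M]
    (S B : Finset ι) (f : ι → M) :
    S.piecewise f ((B : Set ι).indicator f) = ((S ∪ B : Finset ι) : Set ι).indicator f := by
  funext v
  by_cases hS : v ∈ S <;> by_cases hB : v ∈ B <;> simp [hS, hB]

lemma sum_pi_fin_ite_eq_sum_powersetCard [Fintype ι] [DecidableEq ι] {V : Type*}
    [AddCommMonoid V] {N k : ℕ} (hk : k ≤ N) (S : Finset ι) (g : (ι → ℕ) → V)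
    (hg : ∀ m : ι → ℕ, (∀ v ∈ S, m v = 0) → ∑ v ∈ Sᶜ, m v = k → (∃ v, 2 ≤ m v) → g m = 0) :
    ∑ m : ι → Fin (N + 1),
        (if (∀ v ∈ S, (m v : ℕ) = 0) ∧ ∑ v ∈ Sᶜ, (m v : ℕ) = k then g (fun v => m v) else 0) =
      ∑ B ∈ Sᶜ.powersetCard k, g ((B : Set ι).indicator 1) := by
  let toFin (B : Finset ι) (v : ι) : Fin (N + 1) := Fin.ofNat _ ((B : Set ι).indicator 1 v)
  have hind : ∀ B ∈ Sᶜ.powersetCard k, ∀ v, (toFin B v : ℕ) = (B : Set ι).indicator 1 v :=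
    fun B hB v => (Fin.val_ofNat _ _).trans <| Nat.mod_eq_of_lt <|
      (indicator_one_apply_le_card B v).trans_lt (by rw [(mem_powersetCard.mp hB).2]; omega)
  refine (sum_bij_ne_zero (fun B _ _ => toFin B) (fun _ _ _ => mem_univ _) ?_ ?_ ?_).symm
  · intro B₁ h₁ _ B₂ h₂ _ h
    have := funext fun v => congrArg (fun m : ι → Fin (N + 1) => (m v : ℕ)) h
    simp only [hind B₁ h₁, hind B₂ h₂] at this
    exact coe_inj.mp (Set.indicator_one_inj ℕ this)
  · intro m _ hm
    obtain ⟨hC, hg0⟩ : ((∀ v ∈ S, (m v : ℕ) = 0) ∧ ∑ v ∈ Sᶜ, (m v : ℕ) = k) ∧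
        g (fun v => m v) ≠ 0 := by
      by_contra h
      exact hm (by split_ifs with hC <;> tauto)
    have hmB := eq_indicator_one_of_le_one (m := fun v => (m v : ℕ)) fun v => by
      by_contra h
      exact hg0 (hg _ hC.1 hC.2 ⟨v, by omega⟩)
    set B : Finset ι := {v | (m v : ℕ) ≠ 0}
    have hBS : B ⊆ Sᶜ := fun v hv => mem_compl.mpr fun hvS => (mem_filter.mp hv).2 (hC.1 v hvS)
    have hB : B ∈ Sᶜ.powersetCard k :=
      mem_powersetCard.mpr ⟨hBS, by rw [← sum_indicator_one_of_subset hBS, ← hmB, hC.2]⟩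
    exact ⟨B, hB, hmB ▸ hg0, funext fun v => Fin.ext ((hind B hB v).trans (congrFun hmB v).symm)⟩
  · intro B hB _
    obtain ⟨hBS, hBk⟩ := mem_powersetCard.mp hB
    have hC : (∀ v ∈ S, (toFin B v : ℕ) = 0) ∧ ∑ v ∈ Sᶜ, (toFin B v : ℕ) = k := by
      simp only [hind B hB]
      exact ⟨fun v hv => Set.indicator_of_notMem (fun h => mem_compl.mp (hBS h) hv) _,
        by rw [sum_indicator_one_of_subset hBS, hBk]⟩
    rw [if_pos hC]
    exact congrArg g (funext fun v => (hind B hB v).symm)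

end Indicator

section Relations
variable {E V : Type*} [Fintype E] [DecidableEq E] [AddCommMonoid V]

def relationTerm (a : ℕ → (E → ℕ) → V) (S : Finset E) (nS : E → ℕ) (q j : ℕ) : V :=
  ∑ m : E → Fin (q + 1), if (∀ v ∈ S, (m v : ℕ) = 0) ∧ j + ∑ v ∈ Sᶜ, (m v : ℕ) = q then
    a j (S.piecewise nS fun v => m v) else 0

def SatisfiesRelations (e : ℕ) (ε : ℤ) (a : ℕ → (E → ℕ) → V) : Prop :=
  ∀ S : Finset E, (-1 : ℤ) ^ (e - #S) = -ε → ∀ (nS : E → ℕ) (q : ℕ), q ≤ e - #S →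
    ∑ j ∈ range (q + 1), relationTerm a S nS q j = 0

variable {a : ℕ → (E → ℕ) → V} {S : Finset E} {nS : E → ℕ} {q j : ℕ}

lemma relationTerm_eq_zero
    (h : ∀ m : E → ℕ, (∀ v ∈ S, m v = 0) → j + ∑ v ∈ Sᶜ, m v = q → a j (S.piecewise nS m) = 0) :
    relationTerm a S nS q j = 0 :=
  sum_eq_zero fun m _ => by split_ifs with hC; exacts [h _ hC.1 hC.2, rfl]

lemma relationTerm_eq_sum_powersetCard (hjq : j ≤ q)
    (h : ∀ m : E → ℕ, (∀ v ∈ S, m v = 0) → ∑ v ∈ Sᶜ, m v = q - j → (∃ v, 2 ≤ m v) →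
      a j (S.piecewise nS m) = 0) :
    relationTerm a S nS q j =
      ∑ B ∈ Sᶜ.powersetCard (q - j), a j (S.piecewise nS ((B : Set E).indicator 1)) :=
  (sum_congr rfl fun _ _ => if_congr (and_congr_right' (by omega)) rfl rfl).trans
    (sum_pi_fin_ite_eq_sum_powersetCard (Nat.sub_le q j) S (fun m => a j (S.piecewise nS m)) h)

lemma relationTerm_self : relationTerm a S nS q q = a q (S.piecewise nS 0) := by
  rw [relationTerm_eq_sum_powersetCard le_rfl, Nat.sub_self, powersetCard_zero, sum_singleton,
    coe_empty, Set.indicator_empty]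
  · rfl
  rintro m hmS hsum ⟨v, hv⟩
  by_cases hvS : v ∈ S
  · rw [hmS v hvS] at hv
    omega
  · have := single_le_sum (fun _ _ => Nat.zero_le _) (mem_compl.mpr hvS) (f := m)
    omega

lemma relationTerm_one_eq_sum_powersetCard {e : ℕ}
    (h0 : ∀ n : E → ℕ, #{v | n v ≠ 0} < e - j → a j n = 0) (hjq : j ≤ q) (hq : #S + q ≤ e) :
    relationTerm a S 1 q j =
      ∑ B ∈ Sᶜ.powersetCard (q - j), a j (((S ∪ B : Finset E) : Set E).indicator 1) := by
  rw [relationTerm_eq_sum_powersetCard hjq]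
  · simp only [piecewise_indicator_eq_indicator_union]
  · rintro m hmS hsum ⟨v, hv⟩
    have hvS : v ∉ S := fun h => by rw [hmS v h] at hv; omega
    apply h0
    rw [card_filter_piecewise_ne_zero]
    have h1 : #{v ∈ S | (1 : E → ℕ) v ≠ 0} ≤ #S := card_filter_le _ _
    have h2 := card_filter_ne_zero_lt_sum (mem_compl.mpr hvS) hv
    omega

variable {e : ℕ} {ε : ℤ}

theorem coeff_eq_zero_of_card_support_lt (he : Fintype.card E = e)
    (hparity : ∀ i n, (-1 : ℤ) ^ i ≠ ε → a i n = 0) (hrel : SatisfiesRelations e ε a) (i : ℕ) :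
    ∀ n : E → ℕ, #{v | n v ≠ 0} < e - i → a i n = 0 := by
  induction i using Nat.strong_induction_on with
  | _ i ih =>
  intro n hn
  by_cases hpar : (-1 : ℤ) ^ i = ε
  swap
  · exact hparity i n hpar
  subst hpar
  set T : Finset E := {v | n v ≠ 0}
  -- `#S ≡ e + i + 1 (mod 2)` is the parity for which the relation at `S` is available.
  obtain ⟨S, hTS, hST, hS2⟩ := exists_superset_card_mod_two T (by omega) (e + i + 1)
  have hSpar : (-1 : ℤ) ^ (e - #S) = -(-1) ^ i := by
    have := he ▸ card_le_univ S
    rw [neg_one_pow_eq_neg_neg_one_pow_iff]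
    omega
  have hlower : ∀ j ∈ range i, relationTerm a S n i j = 0 := by
    refine fun j hj => relationTerm_eq_zero fun m _ hsum => ih j (mem_range.mp hj) _ ?_
    rw [card_filter_piecewise_ne_zero]
    have h1 : #{v ∈ S | n v ≠ 0} ≤ #T := card_le_card (filter_subset_filter _ (subset_univ S))
    have h2 := card_filter_ne_zero_le_sum Sᶜ m
    omega
  have hn : S.piecewise n 0 = n := by
    funext v
    by_cases hv : v ∈ S
    · exact piecewise_eq_of_mem _ _ _ hv
    · rw [piecewise_eq_of_notMem _ _ _ hv]
      by_contra h
      exact hv (hTS (by simpa [T] using Ne.symm h))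
  have key := hrel S hSpar n i (by omega)
  rwa [sum_range_succ, sum_eq_zero hlower, zero_add, relationTerm_self, hn] at key

theorem sum_coeff_indicator_insert_eq_zero [IsAddTorsionFree V] (he : Fintype.card E = e)
    (hparity : ∀ i n, (-1 : ℤ) ^ i ≠ ε → a i n = 0) (hrel : SatisfiesRelations e ε a) (j : ℕ) :
    ∀ S : Finset E, #S + j + 1 = e →
      ∑ w ∈ Sᶜ, a j (((insert w S : Finset E) : Set E).indicator 1) = 0 := by
  induction j using Nat.strong_induction_on with
  | _ j ih =>
  intro S hS
  by_cases hpar : (-1 : ℤ) ^ j = ε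
  swap
  · exact sum_eq_zero fun w _ => hparity j _ hpar
  subst hpar
  have hvanish := coeff_eq_zero_of_card_support_lt he hparity hrel
  have htop : relationTerm a S 1 (j + 1) (j + 1) = 0 := relationTerm_eq_zero fun _ _ _ =>
    hparity _ _ (by rw [Ne, neg_one_pow_eq_neg_one_pow_iff]; omega)
  have hlower : ∀ j' ∈ range j, relationTerm a S 1 (j + 1) j' = 0 := by
    intro j' hj'
    replace hj' := mem_range.mp hj'
    rw [relationTerm_one_eq_sum_powersetCard (hvanish j') (by omega) (by omega),
      show j + 1 - j' = (j - j') + 1 by omega]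
    refine sum_powersetCard_succ_eq_zero fun B hB => ?_
    obtain ⟨hBS, hBk⟩ := mem_powersetCard.mp hB
    have hdisj : Disjoint S B := disjoint_right.mpr fun v hvB => mem_compl.mp (hBS hvB)
    rw [show Sᶜ \ B = (S ∪ B)ᶜ by rw [compl_union, sdiff_eq_inter_compl]]
    simp only [union_insert]
    exact ih j' hj' (S ∪ B) (by rw [card_union_of_disjoint hdisj]; omega)
  have key := hrel S (by rw [neg_one_pow_eq_neg_neg_one_pow_iff]; omega) 1 (j + 1) (by omega)
  rw [sum_range_succ, sum_range_succ, htop, add_zero, sum_eq_zero hlower, zero_add,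
    relationTerm_one_eq_sum_powersetCard (hvanish j) (by omega) (by omega),
    Nat.add_sub_cancel_left, powersetCard_one, sum_map] at key
  simpa only [Function.Embedding.coeFn_mk, union_singleton] using key

end Relations

theorem taylor_coefficients_vanishing_general
    {E : Type*} [Fintype E] [DecidableEq E] (e : ℕ) (he : Fintype.card E = e)
    {V : Type*} [AddCommGroup V] [Module ℚ V]
    (ε : ℤ)
    (a : ℕ → (E → ℕ) → V)
    (hparity : ∀ i n, (-1 : ℤ) ^ i ≠ ε → a i n = 0)
    (hrel : ∀ S : Finset E, (-1 : ℤ) ^ (e - S.card) = -ε →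
      ∀ nS : E → ℕ, ∀ q : ℕ, q ≤ e - S.card →
        (∑ i ∈ Finset.range (q + 1), ∑ m : E → Fin (q + 1),
          if (∀ v ∈ S, (m v : ℕ) = 0) ∧ i + ∑ v ∈ Sᶜ, (m v : ℕ) = q then
            a i (fun v => if v ∈ S then nS v else (m v : ℕ))
          else 0) = 0) :
    ∀ i < e,
      (∀ n : E → ℕ, (Finset.univ.filter fun v => n v ≠ 0).card < e - i → a i n = 0) ∧
      (∑ n : E → Fin (e - i + 1),
        if (∑ v, (n v : ℕ)) = e - i then a i (fun v => (n v : ℕ)) else 0) = 0 := by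
  have : IsAddTorsionFree V := .of_module_rat V
  have hrel : SatisfiesRelations e ε a := hrel
  have hvanish := coeff_eq_zero_of_card_support_lt he hparity hrel
  intro i hi
  refine ⟨hvanish i, ?_⟩
  have hsum := sum_pi_fin_ite_eq_sum_powersetCard (N := e - i) le_rfl ∅ (a i)
    fun m _ hm ⟨v, hv⟩ => hvanish i m <| by
      rw [← hm, compl_empty]
      exact card_filter_ne_zero_lt_sum (mem_univ v) hv
  simp only [notMem_empty, IsEmpty.forall_iff, implies_true, true_and, compl_empty] at hsum
  rw [hsum, show e - i = (e - i - 1) + 1 by omega]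
  refine sum_powersetCard_succ_eq_zero fun B hB => ?_
  rw [← compl_eq_univ_sdiff]
  exact sum_coeff_indicator_insert_eq_zero he hparity hrel i B
    (by rw [(mem_powersetCard.mp hB).2]; omega)

theorem taylor_coefficients_vanishing
    {E : Type*} [Fintype E] [DecidableEq E] (e : ℕ) (he : Fintype.card E = e) (he1 : 1 ≤ e)
    {V : Type*} [AddCommGroup V] [Module ℚ V]
    (ε : ℤ) (hε : ε = 1 ∨ ε = -1)
    (a : ℕ → (E → ℕ) → V)
    (hparity : ∀ i n, (-1 : ℤ) ^ i ≠ ε → a i n = 0)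
    (hrel : ∀ S : Finset E, (-1 : ℤ) ^ (e - S.card) = -ε →
      ∀ nS : E → ℕ, ∀ q : ℕ, q ≤ e - S.card →
        (∑ i ∈ Finset.range (q + 1), ∑ m : E → Fin (q + 1),
          if (∀ v ∈ S, (m v : ℕ) = 0) ∧ i + ∑ v ∈ Sᶜ, (m v : ℕ) = q then
            a i (fun v => if v ∈ S then nS v else (m v : ℕ))
          else 0) = 0) :
    ∀ i < e,
      (∀ n : E → ℕ, (Finset.univ.filter fun v => n v ≠ 0).card < e - i → a i n = 0) ∧
      (∑ n : E → Fin (e - i + 1),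
        if (∑ v, (n v : ℕ)) = e - i then a i (fun v => (n v : ℕ)) else 0) = 0 :=
  taylor_coefficients_vanishing_general e he ε a hparity hrel
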